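/- Let ω be a nonnegative integrable function on [0,1) such that ω_n ≤ C·ω_{2n} for all n ≥ 1 (equivalently ω ∈ D̂). Then H_ω maps H^∞ boundedly into the Bloch space: there exists C' with |H_ω(f)(0)| + sup_{z∈𝔻}(1-|z|)|H_ω(f)'(z)| ≤ C'·sup_{z∈𝔻}|f(z)| for all bounded analytic f. -/

import Mathlib

/-!
Expanding the kernel, `H_ω(f)(z) = Σ aₙ zⁿ` with `aₙ = ∫₀¹ f(t) tⁿ ω(t) dt / (2(n+1) ω_{2n+1})`,
so `|aₙ| ≤ ‖f‖_∞ ω_n / (2(n+1) ω_{2n+1})`. The doubling condition gives `ω_n ≲ ω_{2n+1}`, hence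
`(n+1)|aₙ| ≲ ‖f‖_∞`; and a power series with `n|aₙ| ≤ K` on the disc has
`(1-|z|)|g'(z)| ≤ K (1-|z|) Σ |z|^{n-1} = K`.
-/

open MeasureTheory Set

/-- The moments of a radial weight. -/
noncomputable def mom (ω : ℝ → ℝ) (n : ℕ) : ℝ := ∫ r in (0:ℝ)..1, r ^ n * ω r

/-- The kernel `K^ω_t(z) = Σ_{n≥0} t^n z^n / (2(n+1)ω_{2n+1})`. -/
noncomputable def Kc (ω : ℝ → ℝ) (t : ℝ) (z : ℂ) : ℂ :=
  ∑' n : ℕ, ((t:ℂ) ^ n * z ^ n) / (2 * ((n:ℂ) + 1) * (mom ω (2 * n + 1) : ℂ))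

/-- The Hilbert-type operator induced by the radial weight `ω`. -/
noncomputable def Hw (ω : ℝ → ℝ) (f : ℂ → ℂ) (z : ℂ) : ℂ :=
  ∫ t in (0:ℝ)..1, f (t:ℂ) * Kc ω t z * (ω t : ℂ)

open Filter

section Moments

variable {ω : ℝ → ℝ}

lemma mom_eq_setIntegral_Ioo (ω : ℝ → ℝ) (n : ℕ) :
    mom ω n = ∫ r in Ioo (0:ℝ) 1, r ^ n * ω r := by
  rw [mom, intervalIntegral.integral_of_le zero_le_one,
    Measure.restrict_congr_set Ioo_ae_eq_Ioc]

lemma integrableOn_pow_mul (hint : IntegrableOn ω (Ioo (0:ℝ) 1)) (n : ℕ) :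
    IntegrableOn (fun r : ℝ => r ^ n * ω r) (Ioo (0:ℝ) 1) := by
  refine Integrable.bdd_mul (c := 1) hint (continuous_pow n).aestronglyMeasurable ?_
  filter_upwards [ae_restrict_mem measurableSet_Ioo] with t ht
  rw [Real.norm_eq_abs, abs_pow, abs_of_nonneg ht.1.le]
  exact pow_le_one₀ ht.1.le ht.2.le

lemma mom_antitone (hnn : ∀ t ∈ Ioo (0:ℝ) 1, 0 ≤ ω t)
    (hint : IntegrableOn ω (Ioo (0:ℝ) 1)) : Antitone (mom ω) := by
  intro n m h
  rw [mom_eq_setIntegral_Ioo, mom_eq_setIntegral_Ioo]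
  refine setIntegral_mono_on (integrableOn_pow_mul hint m) (integrableOn_pow_mul hint n)
    measurableSet_Ioo fun r hr => ?_
  exact mul_le_mul_of_nonneg_right (pow_le_pow_of_le_one hr.1.le hr.2.le h) (hnn r hr)

lemma exists_mom_le_mul_mom_two_mul_add_one (hnn : ∀ t ∈ Ioo (0:ℝ) 1, 0 ≤ ω t)
    (hint : IntegrableOn ω (Ioo (0:ℝ) 1)) (hm : ∀ n, 0 < mom ω n) {C : ℝ}
    (hmom : ∀ n : ℕ, 1 ≤ n → mom ω n ≤ C * mom ω (2 * n)) :
    ∃ B > 0, ∀ n, mom ω n ≤ B * mom ω (2 * n + 1) := by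
  have hC : 0 ≤ C := (pos_of_mul_pos_left ((hm 1).trans_le (hmom 1 le_rfl)) (hm 2).le).le
  refine ⟨max (C * C) (mom ω 0 / mom ω 1), lt_max_of_lt_right (div_pos (hm 0) (hm 1)),
    fun n => ?_⟩
  rcases Nat.eq_zero_or_pos n with rfl | hn
  · calc mom ω 0 = mom ω 0 / mom ω 1 * mom ω 1 := (div_mul_cancel₀ _ (hm 1).ne').symm
      _ ≤ _ := mul_le_mul_of_nonneg_right (le_max_right _ _) (hm 1).le
  · calc mom ω n ≤ C * mom ω (2 * n) := hmom n hn
      _ ≤ C * (C * mom ω (2 * (2 * n))) :=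
          mul_le_mul_of_nonneg_left (hmom (2 * n) (by omega)) hC
      _ ≤ C * C * mom ω (2 * n + 1) := by
          rw [← mul_assoc]
          exact mul_le_mul_of_nonneg_left (mom_antitone hnn hint (by omega)) (by positivity)
      _ ≤ _ := mul_le_mul_of_nonneg_right (le_max_left _ _) (hm _).le

end Moments

section Coefficients

variable {ω : ℝ → ℝ} {f : ℂ → ℂ} {M B : ℝ}

noncomputable def kernelCoeff (ω : ℝ → ℝ) (n : ℕ) : ℝ :=
  (2 * (n + 1) * mom ω (2 * n + 1))⁻¹

lemma Kc_eq_tsum (ω : ℝ → ℝ) (t : ℝ) (z : ℂ) :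
    Kc ω t z = ∑' n : ℕ, (kernelCoeff ω n : ℂ) * (t:ℂ) ^ n * z ^ n := by
  refine tsum_congr fun n => ?_
  simp only [kernelCoeff]
  push_cast
  ring

lemma kernelCoeff_pos (hm : ∀ n, 0 < mom ω n) (n : ℕ) : 0 < kernelCoeff ω n := by
  have := hm (2 * n + 1)
  unfold kernelCoeff
  positivity

lemma mom_mul_kernelCoeff_le (hm : ∀ n, 0 < mom ω n)
    (hB : ∀ n, mom ω n ≤ B * mom ω (2 * n + 1)) (n : ℕ) :
    mom ω n * kernelCoeff ω n ≤ B / (2 * (n + 1)) := by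
  have := hm (2 * n + 1)
  rw [kernelCoeff, ← div_eq_mul_inv, div_le_div_iff₀ (by positivity) (by positivity)]
  nlinarith [hB n]

noncomputable def HwCoeff (ω : ℝ → ℝ) (f : ℂ → ℂ) (n : ℕ) : ℂ :=
  kernelCoeff ω n * ∫ t in Ioo (0:ℝ) 1, f t * ((t ^ n * ω t : ℝ) : ℂ)

lemma integrableOn_mul_pow_mul (hint : IntegrableOn ω (Ioo (0:ℝ) 1))
    (hf : AEStronglyMeasurable (fun t : ℝ => f t) (volume.restrict (Ioo 0 1)))
    (hfM : ∀ t ∈ Ioo (0:ℝ) 1, ‖f t‖ ≤ M) (n : ℕ) :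
    IntegrableOn (fun t : ℝ => f t * ((t ^ n * ω t : ℝ) : ℂ)) (Ioo (0:ℝ) 1) :=
  (integrableOn_pow_mul hint n).ofReal.bdd_mul hf <|
    (ae_restrict_mem measurableSet_Ioo).mono hfM

lemma kernelCoeff_mul_integral_norm_le (hnn : ∀ t ∈ Ioo (0:ℝ) 1, 0 ≤ ω t)
    (hint : IntegrableOn ω (Ioo (0:ℝ) 1))
    (hf : AEStronglyMeasurable (fun t : ℝ => f t) (volume.restrict (Ioo 0 1)))
    (hfM : ∀ t ∈ Ioo (0:ℝ) 1, ‖f t‖ ≤ M) (hm : ∀ n, 0 < mom ω n)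
    (hB : ∀ n, mom ω n ≤ B * mom ω (2 * n + 1)) (n : ℕ) :
    kernelCoeff ω n * ∫ t in Ioo (0:ℝ) 1, ‖f t * ((t ^ n * ω t : ℝ) : ℂ)‖
      ≤ M * B / (2 * (n + 1)) := by
  have hM : 0 ≤ M := (norm_nonneg _).trans (hfM 2⁻¹ (by norm_num))
  have hnorm : ∫ t in Ioo (0:ℝ) 1, ‖f t * ((t ^ n * ω t : ℝ) : ℂ)‖ ≤ M * mom ω n := by
    rw [mom_eq_setIntegral_Ioo, ← integral_const_mul]
    refine setIntegral_mono_on (integrableOn_mul_pow_mul hint hf hfM n).norm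
      ((integrableOn_pow_mul hint n).const_mul M) measurableSet_Ioo fun t ht => ?_
    have hpos : 0 ≤ t ^ n * ω t := mul_nonneg (pow_nonneg ht.1.le n) (hnn t ht)
    rw [norm_mul, Complex.norm_real, Real.norm_of_nonneg hpos]
    exact mul_le_mul_of_nonneg_right (hfM t ht) hpos
  calc kernelCoeff ω n * ∫ t in Ioo (0:ℝ) 1, ‖f t * ((t ^ n * ω t : ℝ) : ℂ)‖
      ≤ kernelCoeff ω n * (M * mom ω n) :=
        mul_le_mul_of_nonneg_left hnorm (kernelCoeff_pos hm n).le
    _ = M * (mom ω n * kernelCoeff ω n) := by ring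
    _ ≤ M * (B / (2 * (n + 1))) :=
        mul_le_mul_of_nonneg_left (mom_mul_kernelCoeff_le hm hB n) hM
    _ = M * B / (2 * (n + 1)) := by ring

lemma add_one_mul_norm_HwCoeff_le (hnn : ∀ t ∈ Ioo (0:ℝ) 1, 0 ≤ ω t)
    (hint : IntegrableOn ω (Ioo (0:ℝ) 1))
    (hf : AEStronglyMeasurable (fun t : ℝ => f t) (volume.restrict (Ioo 0 1)))
    (hfM : ∀ t ∈ Ioo (0:ℝ) 1, ‖f t‖ ≤ M) (hm : ∀ n, 0 < mom ω n)
    (hB : ∀ n, mom ω n ≤ B * mom ω (2 * n + 1)) (n : ℕ) :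
    (n + 1) * ‖HwCoeff ω f n‖ ≤ M * B / 2 := by
  have hle : ‖HwCoeff ω f n‖ ≤ M * B / (2 * (n + 1)) := by
    rw [HwCoeff, norm_mul, Complex.norm_real, Real.norm_of_nonneg (kernelCoeff_pos hm n).le]
    exact (mul_le_mul_of_nonneg_left (norm_integral_le_integral_norm _)
      (kernelCoeff_pos hm n).le).trans
      (kernelCoeff_mul_integral_norm_le hnn hint hf hfM hm hB n)
  rw [le_div_iff₀ (by positivity)] at hle
  linarith

lemma Hw_eq_setIntegral_tsum (ω : ℝ → ℝ) (f : ℂ → ℂ) (z : ℂ) :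
    Hw ω f z = ∫ t in Ioo (0:ℝ) 1,
      ∑' n, f t * ((t ^ n * ω t : ℝ) : ℂ) * (kernelCoeff ω n * z ^ n) := by
  rw [Hw, intervalIntegral.integral_of_le zero_le_one,
    Measure.restrict_congr_set Ioo_ae_eq_Ioc.symm]
  refine integral_congr_ae (Eventually.of_forall fun t => ?_)
  simp only [Kc_eq_tsum, ← tsum_mul_left, ← tsum_mul_right]
  refine tsum_congr fun n => ?_
  push_cast
  ring

/-- Sum and integral may be swapped: by `kernelCoeff_mul_integral_norm_le` the integrated norms
are dominated by a geometric series. -/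
lemma hasSum_HwCoeff_mul_pow (hnn : ∀ t ∈ Ioo (0:ℝ) 1, 0 ≤ ω t)
    (hint : IntegrableOn ω (Ioo (0:ℝ) 1))
    (hf : AEStronglyMeasurable (fun t : ℝ => f t) (volume.restrict (Ioo 0 1)))
    (hfM : ∀ t ∈ Ioo (0:ℝ) 1, ‖f t‖ ≤ M) (hm : ∀ n, 0 < mom ω n)
    (hB : ∀ n, mom ω n ≤ B * mom ω (2 * n + 1)) {z : ℂ} (hz : ‖z‖ < 1) :
    HasSum (fun n => HwCoeff ω f n * z ^ n) (Hw ω f z) := by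
  set F : ℕ → ℝ → ℂ := fun n t =>
    f t * ((t ^ n * ω t : ℝ) : ℂ) * (kernelCoeff ω n * z ^ n)
  have hM : 0 ≤ M := (norm_nonneg _).trans (hfM 2⁻¹ (by norm_num))
  have hF_int : ∀ n, Integrable (F n) (volume.restrict (Ioo 0 1)) := fun n =>
    (integrableOn_mul_pow_mul hint hf hfM n).mul_const _
  have hF_norm : ∀ n, ∫ t in Ioo (0:ℝ) 1, ‖F n t‖ ≤ M * B / 2 * ‖z‖ ^ n := by
    intro n
    have hκz : ‖(kernelCoeff ω n : ℂ) * z ^ n‖ = kernelCoeff ω n * ‖z‖ ^ n := by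
      rw [norm_mul, Complex.norm_real, norm_pow, Real.norm_of_nonneg (kernelCoeff_pos hm n).le]
    simp only [F, norm_mul _ ((kernelCoeff ω n : ℂ) * z ^ n), hκz]
    rw [integral_mul_const, ← mul_assoc, mul_comm _ (kernelCoeff ω n)]
    refine mul_le_mul_of_nonneg_right ?_ (by positivity)
    refine (kernelCoeff_mul_integral_norm_le hnn hint hf hfM hm hB n).trans ?_
    have hB0 : 0 ≤ B := (pos_of_mul_pos_left ((hm 0).trans_le (hB 0)) (hm 1).le).le
    exact div_le_div_of_nonneg_left (by positivity) two_pos (by linarith)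
  have hF_sum : Summable fun n => ∫ t in Ioo (0:ℝ) 1, ‖F n t‖ :=
    .of_nonneg_of_le (fun n => integral_nonneg fun t => norm_nonneg _) hF_norm
      ((summable_geometric_of_lt_one (norm_nonneg z) hz).mul_left _)
  have hcoeff :
      (fun n => HwCoeff ω f n * z ^ n) = fun n => ∫ t in Ioo (0:ℝ) 1, F n t := by
    ext n
    simp only [F, HwCoeff, integral_mul_const]
    ring
  rw [Hw_eq_setIntegral_tsum, hcoeff]
  exact hasSum_integral_of_summable_integral_norm hF_int hF_sum

end Coefficients

section PowerSeries

variable {a : ℕ → ℂ} {K : ℝ}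

lemma norm_mul_natCast_mul_pow_sub_one_le (ha : ∀ n : ℕ, n * ‖a n‖ ≤ K) {y : ℂ} {r : ℝ}
    (hy : ‖y‖ ≤ r) (n : ℕ) : ‖a n * (n * y ^ (n - 1))‖ ≤ K * r ^ (n - 1) := by
  rw [norm_mul, norm_mul, Complex.norm_natCast, norm_pow, ← mul_assoc, mul_comm ‖a n‖]
  exact mul_le_mul (ha n) (pow_le_pow_left₀ (norm_nonneg y) hy _) (by positivity)
    ((by simpa using ha 0 : 0 ≤ K))

lemma summable_mul_pow_sub_one {r : ℝ} (hr0 : 0 ≤ r) (hr : r < 1) :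
    Summable fun n : ℕ => K * r ^ (n - 1) :=
  (summable_nat_add_iff 1).mp <| by
    simpa using (summable_geometric_of_lt_one hr0 hr).mul_left K

lemma hasDerivAt_tsum_mul_pow (ha : ∀ n : ℕ, n * ‖a n‖ ≤ K) {z : ℂ} (hz : ‖z‖ < 1) :
    HasDerivAt (fun w => ∑' n, a n * w ^ n) (∑' n, a n * (n * z ^ (n - 1))) z := by
  set r : ℝ := (1 + ‖z‖) / 2
  have hzr : ‖z‖ < r := by simp only [r]; linarith
  have hr1 : r < 1 := by simp only [r]; linarith
  have hr0 : 0 < r := (norm_nonneg z).trans_lt hzr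
  refine hasDerivAt_tsum_of_isPreconnected (summable_mul_pow_sub_one hr0.le hr1)
    Metric.isOpen_ball (convex_ball 0 r).isPreconnected
    (fun n y _ => (hasDerivAt_pow n y).const_mul (a n))
    (fun n y hy => norm_mul_natCast_mul_pow_sub_one_le ha (mem_ball_zero_iff.mp hy).le n)
    (Metric.mem_ball_self hr0) ?_ (mem_ball_zero_iff.mpr hzr)
  exact summable_of_ne_finset_zero (s := {0}) fun n hn => by simp_all

lemma one_sub_norm_mul_norm_deriv_tsum_le (ha : ∀ n : ℕ, n * ‖a n‖ ≤ K) {z : ℂ}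
    (hz : ‖z‖ < 1) :
    (1 - ‖z‖) * ‖deriv (fun w => ∑' n, a n * w ^ n) z‖ ≤ K := by
  rw [(hasDerivAt_tsum_mul_pow ha hz).deriv]
  have hs : Summable fun n : ℕ => a n * (n * z ^ (n - 1)) :=
    .of_norm_bounded (summable_mul_pow_sub_one (norm_nonneg z) hz)
      (norm_mul_natCast_mul_pow_sub_one_le ha le_rfl)
  have hgeo := (hasSum_geometric_of_lt_one (norm_nonneg z) hz).mul_left K
  have hbound : ‖∑' n : ℕ, a n * (n * z ^ (n - 1))‖ ≤ K * (1 - ‖z‖)⁻¹ := by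
    rw [hs.tsum_eq_zero_add]
    simp only [CharP.cast_eq_zero, zero_mul, mul_zero, zero_add]
    refine tsum_of_norm_bounded hgeo fun n => ?_
    simpa using norm_mul_natCast_mul_pow_sub_one_le ha le_rfl (n + 1)
  have h1z : 0 < 1 - ‖z‖ := by linarith
  calc (1 - ‖z‖) * ‖∑' n : ℕ, a n * (n * z ^ (n - 1))‖
      ≤ (1 - ‖z‖) * (K * (1 - ‖z‖)⁻¹) := mul_le_mul_of_nonneg_left hbound h1z.le
    _ = K := by field_simp

end PowerSeries

theorem stmt15_general (ω : ℝ → ℝ)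
    (hnn : ∀ t ∈ Ico (0:ℝ) 1, 0 ≤ ω t)
    (hint : IntegrableOn ω (Ico (0:ℝ) 1))
    (hm : ∀ n : ℕ, 0 < mom ω n)
    (C : ℝ)
    (hmom : ∀ n : ℕ, 1 ≤ n → mom ω n ≤ C * mom ω (2 * n)) :
    ∃ C' > (0:ℝ), ∀ (f : ℂ → ℂ) (M : ℝ),
      DifferentiableOn ℂ f (Metric.ball 0 1) →
      (∀ z ∈ Metric.ball (0:ℂ) 1, ‖f z‖ ≤ M) →
      ‖Hw ω f 0‖ +
        (⨆ z : Metric.ball (0:ℂ) 1,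
          (1 - ‖(z:ℂ)‖) * ‖deriv (Hw ω f) (z:ℂ)‖) ≤ C' * M := by
  have hnn' : ∀ t ∈ Ioo (0:ℝ) 1, 0 ≤ ω t := fun t ht => hnn t (Ioo_subset_Ico_self ht)
  have hint' : IntegrableOn ω (Ioo (0:ℝ) 1) := hint.mono_set Ioo_subset_Ico_self
  obtain ⟨B, hB0, hB⟩ := exists_mom_le_mul_mom_two_mul_add_one hnn' hint' hm hmom
  refine ⟨B, hB0, fun f M hf hfM => ?_⟩
  have hM : 0 ≤ M := (norm_nonneg _).trans (hfM 0 (Metric.mem_ball_self one_pos))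
  have hmaps : MapsTo (fun t : ℝ => (t : ℂ)) (Ioo 0 1) (Metric.ball 0 1) := fun t ht => by
    simpa [abs_of_pos ht.1] using ht.2
  have hfm : AEStronglyMeasurable (fun t : ℝ => f t) (volume.restrict (Ioo 0 1)) :=
    (hf.continuousOn.comp Complex.continuous_ofReal.continuousOn hmaps).aestronglyMeasurable
      measurableSet_Ioo
  have hfM' : ∀ t ∈ Ioo (0:ℝ) 1, ‖f t‖ ≤ M := fun t ht => hfM _ (hmaps ht)
  have hcoeff := add_one_mul_norm_HwCoeff_le hnn' hint' hfm hfM' hm hB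
  have hHw : ∀ z ∈ Metric.ball (0:ℂ) 1, Hw ω f z = ∑' n, HwCoeff ω f n * z ^ n :=
    fun z hz =>
      (hasSum_HwCoeff_mul_pow hnn' hint' hfm hfM' hm hB (mem_ball_zero_iff.mp hz)).tsum_eq.symm
  have hvalue : ‖Hw ω f 0‖ ≤ M * B / 2 := by
    rw [hHw 0 (Metric.mem_ball_self one_pos), tsum_eq_single 0 fun n hn => by simp [hn]]
    simpa using hcoeff 0
  have hderiv : ∀ z ∈ Metric.ball (0:ℂ) 1, (1 - ‖z‖) * ‖deriv (Hw ω f) z‖ ≤ M * B / 2 := by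
    intro z hz
    have hloc : Hw ω f =ᶠ[nhds z] fun w => ∑' n, HwCoeff ω f n * w ^ n :=
      eventually_of_mem (Metric.isOpen_ball.mem_nhds hz) hHw
    rw [hloc.deriv_eq]
    exact one_sub_norm_mul_norm_deriv_tsum_le
      (fun n => le_trans (by linarith [norm_nonneg (HwCoeff ω f n)]) (hcoeff n))
      (mem_ball_zero_iff.mp hz)
  calc _ ≤ M * B / 2 + M * B / 2 := add_le_add hvalue <|
        Real.iSup_le (fun z : Metric.ball (0:ℂ) 1 => hderiv z z.2) (by positivity)
    _ = B * M := by ring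

theorem stmt15 (ω : ℝ → ℝ)
    (hnn : ∀ t ∈ Ico (0:ℝ) 1, 0 ≤ ω t)
    (hint : IntegrableOn ω (Ico (0:ℝ) 1))
    (hm : ∀ n : ℕ, 0 < mom ω n)
    (C : ℝ) (hC : 0 < C)
    (hmom : ∀ n : ℕ, 1 ≤ n → mom ω n ≤ C * mom ω (2 * n)) :
    ∃ C' > (0:ℝ), ∀ (f : ℂ → ℂ) (M : ℝ),
      DifferentiableOn ℂ f (Metric.ball 0 1) →
      (∀ z ∈ Metric.ball (0:ℂ) 1, ‖f z‖ ≤ M) →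
      ‖Hw ω f 0‖ +
        (⨆ z : Metric.ball (0:ℂ) 1,
          (1 - ‖(z:ℂ)‖) * ‖deriv (Hw ω f) (z:ℂ)‖) ≤ C' * M :=
  stmt15_general ω hnn hint hm C hmom
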